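/- arXiv:1801.09507 — 4 statements merged into one kernel-verified Lean document; each statement's English description precedes it below -/
import Mathlib

section
/- Let the step path be given by a jump chain Y and jump times T as in the context, with explosion time T∞, path X, exit time τ from the domain D, and exit index σ of the jump chain from D. Then: if σ < ∞, say σ = (k : ℕ), then τ = ((T k : ℝ≥0∞)); and if σ = ∞ (i.e. Y n ∈ D for all n), then τ = ∞. (Paper's Lemma 2.2.) -/
open scoped ENNReal

/-- Relation between the exit time `τ` of the path from the domain `D` and the exit index
`σ` of the jump chain: if `σ = k < ∞` then `τ = T k` (as an extended nonnegative real),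
and if `σ = ∞` then `τ = ∞`. -/
theorem exit_time_eq_jump_time {S : Type*} [Nonempty S] (D : Set S)
    (Y : ℕ → S) (T : ℕ → ℝ)
    (hT0 : T 0 = 0) (hTlt : ∀ n, T n < T (n + 1))
    (Tinf : ℝ≥0∞) (hTinf : Tinf = ⨆ n, ENNReal.ofReal (T n))
    (X : ℝ → S)
    (hX : ∀ n, ∀ t : ℝ, T n ≤ t → t < T (n + 1) → X t = Y n)
    (τ : ℝ≥0∞)
    (hτ : τ = sInf {s : ℝ≥0∞ |
      ∃ t : ℝ, 0 ≤ t ∧ s = ENNReal.ofReal t ∧ s < Tinf ∧ X t ∉ D})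
    (σ : ℕ∞)
    (hσ : σ = sInf {m : ℕ∞ | ∃ n : ℕ, m = (n : ℕ∞) ∧ Y n ∉ D}) :
    (∀ k : ℕ, σ = (k : ℕ∞) → τ = ENNReal.ofReal (T k)) ∧
    (σ = ⊤ → τ = ⊤) := by
  classical
  have hmono : StrictMono T := strictMono_nat_of_lt_succ hTlt
  have hT0le : ∀ n, 0 ≤ T n := fun n => hT0 ▸ hmono.monotone (Nat.zero_le n)
  -- locate any time before the explosion time in a jump interval
  have hloc : ∀ t : ℝ, 0 ≤ t → ENNReal.ofReal t < Tinf →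
      ∃ n, T n ≤ t ∧ t < T (n + 1) := by
    intro t ht hlt
    rw [hTinf] at hlt
    obtain ⟨m, hm⟩ := lt_iSup_iff.mp hlt
    have htm : t < T m := by
      by_contra h
      exact absurd (ENNReal.ofReal_le_ofReal (not_lt.mp h)) (not_le.mpr hm)
    have hP : ∃ n, t < T n := ⟨m, htm⟩
    have hNpos : 0 < Nat.find hP := by
      rcases Nat.eq_zero_or_pos (Nat.find hP) with h0 | h
      · exfalso
        have := Nat.find_spec hP
        rw [h0, hT0] at this
        exact absurd this (not_lt.mpr ht)
      · exact h
    refine ⟨Nat.find hP - 1, ?_, ?_⟩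
    · exact not_lt.mp (Nat.find_min hP (by omega))
    · have h1 : Nat.find hP - 1 + 1 = Nat.find hP := by omega
      rw [h1]
      exact Nat.find_spec hP
  constructor
  · intro k hk
    -- the jump chain leaves D, and k is the first exit index
    have hne : ∃ n, Y n ∉ D := by
      by_contra h
      push_neg at h
      have hempty : {m : ℕ∞ | ∃ n : ℕ, m = (n : ℕ∞) ∧ Y n ∉ D} = ∅ := by
        ext m
        simp only [Set.mem_setOf_eq, Set.mem_empty_iff_false, iff_false, not_exists]
        rintro n ⟨rfl, hn⟩
        exact hn (h n)
      rw [hempty, sInf_empty] at hσ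
      rw [hσ] at hk
      exact (ENat.coe_ne_top k) hk.symm
    set n0 := Nat.find hne with hn0
    have hσn0 : σ = (n0 : ℕ∞) := by
      rw [hσ]
      apply le_antisymm
      · exact sInf_le ⟨n0, rfl, Nat.find_spec hne⟩
      · apply le_sInf
        rintro m ⟨n, rfl, hn⟩
        exact_mod_cast Nat.find_min' hne hn
    have hkn0 : k = n0 := by
      rw [hk] at hσn0
      exact_mod_cast hσn0
    have hYk : Y k ∉ D := hkn0 ▸ Nat.find_spec hne
    have hYlt : ∀ m, m < k → Y m ∈ D := by
      intro m hm
      by_contra h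
      exact absurd (Nat.find_min' hne h) (by omega)
    -- T k is before the explosion time
    have hTkTinf : ENNReal.ofReal (T k) < Tinf := by
      have h1 : ENNReal.ofReal (T k) < ENNReal.ofReal (T (k + 1)) :=
        (ENNReal.ofReal_lt_ofReal_iff_of_nonneg (hT0le k)).mpr (hTlt k)
      calc ENNReal.ofReal (T k) < ENNReal.ofReal (T (k + 1)) := h1
        _ ≤ Tinf := hTinf ▸ le_iSup (fun n => ENNReal.ofReal (T n)) (k + 1)
    rw [hτ]
    apply le_antisymm
    · apply sInf_le
      refine ⟨T k, hT0le k, rfl, hTkTinf, ?_⟩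
      rw [hX k (T k) le_rfl (hTlt k)]
      exact hYk
    · apply le_sInf
      rintro s ⟨t, ht0, rfl, hst, hXt⟩
      obtain ⟨n, hn1, hn2⟩ := hloc t ht0 hst
      rw [hX n t hn1 hn2] at hXt
      have hkn : k ≤ n := by
        by_contra h
        exact hXt (hYlt n (by omega))
      exact ENNReal.ofReal_le_ofReal (le_trans (hmono.monotone hkn) hn1)
  · intro htop
    have hD : ∀ n, Y n ∈ D := by
      intro n
      by_contra h
      have : σ ≤ (n : ℕ∞) := hσ ▸ sInf_le ⟨n, rfl, h⟩
      rw [htop] at this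
      exact (ENat.coe_ne_top n) (top_le_iff.mp this)
    have hempty : {s : ℝ≥0∞ |
        ∃ t : ℝ, 0 ≤ t ∧ s = ENNReal.ofReal t ∧ s < Tinf ∧ X t ∉ D} = ∅ := by
      ext s
      simp only [Set.mem_setOf_eq, Set.mem_empty_iff_false, iff_false, not_exists]
      rintro t ⟨ht0, rfl, hst, hXt⟩
      obtain ⟨n, hn1, hn2⟩ := hloc t ht0 hst
      rw [hX n t hn1 hn2] at hXt
      exact hXt (hD n)
    rw [hτ, hempty, sInf_empty]
end

section
/- With the coupled construction of the context, let T∞ := ⨆ n, ((T n : ℝ≥0∞)) and T'∞ := ⨆ n, ((T' n : ℝ≥0∞)) be the explosion times, X and X' the associated step paths (X t = Y n for T n ≤ t < T (n+1), and likewise X'), and τ, τ' the exit times from D (τ := sInf {s : ℝ≥0∞ | ∃ t : ℝ, 0 ≤ t ∧ s = (t : ℝ≥0∞) ∧ s < T∞ ∧ X t ∉ D}, and likewise τ'). Then τ = τ', min τ T∞ = min τ' T'∞, and X t = X' t for every real t ≥ 0 with (t : ℝ≥0∞) ≤ τ and (t : ℝ≥0∞) < T∞. (Continuous part of the paper's Lemma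 2.3, eqs. (2.7)–(2.8).) -/
open scoped ENNReal

/-- Continuous part of the coupling lemma: two step paths driven by the same randomness,
whose jump maps and holding-time maps agree on the domain `D`, exit `D` at the same time,
satisfy `min τ T∞ = min τ' T'∞`, and coincide up to (and including) the exit time (before
explosion). -/
theorem coupled_paths_agree_up_to_exit {S U : Type*} [Nonempty S] (D : Set S)
    (u : ℕ → U) (y0 : S)
    (F F' : S → U → S) (h h' : S → U → ℝ)
    (hpos : ∀ x v, h x v > 0) (hpos' : ∀ x v, h' x v > 0)
    (hF : ∀ x ∈ D, F x = F' x) (hh : ∀ x ∈ D, h x = h' x)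
    (Y Y' : ℕ → S) (T T' : ℕ → ℝ)
    (hY0 : Y 0 = y0) (hY'0 : Y' 0 = y0)
    (hY : ∀ n, Y (n + 1) = F (Y n) (u n))
    (hY' : ∀ n, Y' (n + 1) = F' (Y' n) (u n))
    (hT0 : T 0 = 0) (hT'0 : T' 0 = 0)
    (hT : ∀ n, T (n + 1) = T n + h (Y n) (u n))
    (hT' : ∀ n, T' (n + 1) = T' n + h' (Y' n) (u n))
    (Tinf Tinf' : ℝ≥0∞)
    (hTinf : Tinf = ⨆ n, ENNReal.ofReal (T n))
    (hTinf' : Tinf' = ⨆ n, ENNReal.ofReal (T' n))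
    (X X' : ℝ → S)
    (hX : ∀ n, ∀ t : ℝ, T n ≤ t → t < T (n + 1) → X t = Y n)
    (hX' : ∀ n, ∀ t : ℝ, T' n ≤ t → t < T' (n + 1) → X' t = Y' n)
    (τ τ' : ℝ≥0∞)
    (hτ : τ = sInf {s : ℝ≥0∞ |
      ∃ t : ℝ, 0 ≤ t ∧ s = ENNReal.ofReal t ∧ s < Tinf ∧ X t ∉ D})
    (hτ' : τ' = sInf {s : ℝ≥0∞ |
      ∃ t : ℝ, 0 ≤ t ∧ s = ENNReal.ofReal t ∧ s < Tinf' ∧ X' t ∉ D}) :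
    τ = τ' ∧ min τ Tinf = min τ' Tinf' ∧
      ∀ t : ℝ, 0 ≤ t → ENNReal.ofReal t ≤ τ → ENNReal.ofReal t < Tinf → X t = X' t := by
  classical
  -- Basic facts about the jump times
  have hTstep : ∀ n, T n < T (n + 1) := fun n => by
    rw [hT]; linarith [hpos (Y n) (u n)]
  have hT'step : ∀ n, T' n < T' (n + 1) := fun n => by
    rw [hT']; linarith [hpos' (Y' n) (u n)]
  have hTmono : StrictMono T := strictMono_nat_of_lt_succ hTstep
  have hT'mono : StrictMono T' := strictMono_nat_of_lt_succ hT'step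
  have hTnn : ∀ n, 0 ≤ T n := fun n => hT0 ▸ hTmono.monotone (Nat.zero_le n)
  have hT'nn : ∀ n, 0 ≤ T' n := fun n => hT'0 ▸ hT'mono.monotone (Nat.zero_le n)
  -- agreement by induction as long as we stay in D
  have agree : ∀ n, (∀ k, k < n → Y k ∈ D) → Y n = Y' n ∧ T n = T' n := by
    intro n
    induction n with
    | zero => intro _; exact ⟨hY0.trans hY'0.symm, hT0.trans hT'0.symm⟩
    | succ n ih =>
      intro hd
      obtain ⟨hYe, hTe⟩ := ih fun k hk => hd k (hk.trans (Nat.lt_succ_self n))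
      have hDn : Y n ∈ D := hd n (Nat.lt_succ_self n)
      refine ⟨?_, ?_⟩
      · rw [hY, hY', hF (Y n) hDn, hYe]
      · rw [hT, hT', hTe, hh (Y n) hDn, hYe]
  -- locating a real time in an interval [T n, T (n+1))
  have hfind : ∀ (V : ℕ → ℝ), StrictMono V → V 0 = 0 →
      ∀ t : ℝ, 0 ≤ t → ENNReal.ofReal t < (⨆ n, ENNReal.ofReal (V n)) →
      ∃ n, V n ≤ t ∧ t < V (n + 1) := by
    intro V hVmono hV0 t ht hlt
    rw [lt_iSup_iff] at hlt
    obtain ⟨m, hm⟩ := hlt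
    have htm : t < V m := by
      by_contra hcon
      push_neg at hcon
      exact absurd hm (not_lt.2 (ENNReal.ofReal_le_ofReal hcon))
    have hex : ∃ n, t < V (n + 1) :=
      ⟨m, htm.trans_le (hVmono.monotone (Nat.le_succ m))⟩
    refine ⟨Nat.find hex, ?_, Nat.find_spec hex⟩
    rcases Nat.eq_zero_or_pos (Nat.find hex) with h0 | hpos0
    · rw [h0, hV0]; exact ht
    · obtain ⟨k, hk⟩ := Nat.exists_eq_succ_of_ne_zero hpos0.ne'
      rw [hk]
      have := Nat.find_min hex (m := k) (by omega)
      push_neg at this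
      exact this
  by_cases hall : ∀ n, Y n ∈ D
  · -- no exit: paths agree forever
    have hYY : ∀ n, Y n = Y' n ∧ T n = T' n := fun n => agree n fun k _ => hall k
    have hTT : Tinf = Tinf' := by
      rw [hTinf, hTinf']
      exact iSup_congr fun n => by rw [(hYY n).2]
    have hXX : ∀ t : ℝ, 0 ≤ t → ENNReal.ofReal t < Tinf → X t = X' t := by
      intro t ht hlt
      obtain ⟨n, h1, h2⟩ := hfind T hTmono hT0 t ht (hTinf ▸ hlt)
      rw [hX n t h1 h2, hX' n t ((hYY n).2 ▸ h1) ((hYY (n + 1)).2 ▸ h2), (hYY n).1]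
    have hsetX : {s : ℝ≥0∞ | ∃ t : ℝ, 0 ≤ t ∧ s = ENNReal.ofReal t ∧ s < Tinf ∧ X t ∉ D} = ∅ := by
      ext s
      simp only [Set.mem_setOf_eq, Set.mem_empty_iff_false, iff_false]
      rintro ⟨t, ht, rfl, hlt, hnD⟩
      obtain ⟨n, h1, h2⟩ := hfind T hTmono hT0 t ht (hTinf ▸ hlt)
      exact hnD ((hX n t h1 h2) ▸ hall n)
    have hsetX' : {s : ℝ≥0∞ | ∃ t : ℝ, 0 ≤ t ∧ s = ENNReal.ofReal t ∧ s < Tinf' ∧ X' t ∉ D} = ∅ := by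
      ext s
      simp only [Set.mem_setOf_eq, Set.mem_empty_iff_false, iff_false]
      rintro ⟨t, ht, rfl, hlt, hnD⟩
      obtain ⟨n, h1, h2⟩ := hfind T' hT'mono hT'0 t ht (hTinf' ▸ hlt)
      exact hnD ((hX' n t h1 h2) ▸ ((hYY n).1 ▸ hall n))
    have hτtop : τ = ⊤ := by rw [hτ, hsetX, sInf_empty]
    have hτ'top : τ' = ⊤ := by rw [hτ', hsetX', sInf_empty]
    refine ⟨hτtop.trans hτ'top.symm, ?_, fun t ht _ hlt => hXX t ht hlt⟩
    rw [hτtop, hτ'top, hTT]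
  · -- there is a first exit index N
    push_neg at hall
    set N := Nat.find hall with hNdef
    have hN : Y N ∉ D := Nat.find_spec hall
    have hmin : ∀ k, k < N → Y k ∈ D := fun k hk =>
      not_not.1 (Nat.find_min hall hk)
    have hagreeN : ∀ k, k ≤ N → Y k = Y' k ∧ T k = T' k := fun k hk =>
      agree k fun j hj => hmin j (hj.trans_le hk)
    have hTN' : T N = T' N := (hagreeN N le_rfl).2
    have hYN' : Y N = Y' N := (hagreeN N le_rfl).1
    -- T N is strictly before explosion
    have hlt_inf : ENNReal.ofReal (T N) < Tinf := by
      rw [hTinf]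
      refine lt_of_lt_of_le ?_ (le_iSup (fun n => ENNReal.ofReal (T n)) (N + 1))
      exact (ENNReal.ofReal_lt_ofReal_iff (lt_of_le_of_lt (hTnn N) (hTstep N))).2 (hTstep N)
    have hlt_inf' : ENNReal.ofReal (T' N) < Tinf' := by
      rw [hTinf']
      refine lt_of_lt_of_le ?_ (le_iSup (fun n => ENNReal.ofReal (T' n)) (N + 1))
      exact (ENNReal.ofReal_lt_ofReal_iff (lt_of_le_of_lt (hT'nn N) (hT'step N))).2 (hT'step N)
    -- τ = ofReal (T N)
    have hτval : τ = ENNReal.ofReal (T N) := by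
      rw [hτ]
      apply le_antisymm
      · exact sInf_le ⟨T N, hTnn N, rfl, hlt_inf,
          (hX N (T N) le_rfl (hTstep N)) ▸ hN⟩
      · refine le_sInf ?_
        rintro s ⟨t, ht, rfl, hlt, hnD⟩
        obtain ⟨n, h1, h2⟩ := hfind T hTmono hT0 t ht (hTinf ▸ hlt)
        have hXt : X t = Y n := hX n t h1 h2
        have hNn : N ≤ n := Nat.find_le (hXt ▸ hnD)
        exact ENNReal.ofReal_le_ofReal ((hTmono.monotone hNn).trans h1)
    have hτ'val : τ' = ENNReal.ofReal (T' N) := by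
      rw [hτ']
      apply le_antisymm
      · exact sInf_le ⟨T' N, hT'nn N, rfl, hlt_inf',
          (hX' N (T' N) le_rfl (hT'step N)) ▸ (hYN' ▸ hN)⟩
      · refine le_sInf ?_
        rintro s ⟨t, ht, rfl, hlt, hnD⟩
        obtain ⟨n, h1, h2⟩ := hfind T' hT'mono hT'0 t ht (hTinf' ▸ hlt)
        have hXt : X' t = Y' n := hX' n t h1 h2
        have hNn : N ≤ n := by
          by_contra hc
          push_neg at hc
          exact hnD (hXt ▸ ((hagreeN n hc.le).1 ▸ hmin n hc))
        exact ENNReal.ofReal_le_ofReal ((hT'mono.monotone hNn).trans h1)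
    have hττ' : τ = τ' := by rw [hτval, hτ'val, hTN']
    refine ⟨hττ', ?_, ?_⟩
    · rw [min_eq_left (hτval ▸ hlt_inf.le), min_eq_left (hτ'val ▸ hlt_inf'.le), hττ']
    · intro t ht hle hlt
      have htN : t ≤ T N := by
        rw [hτval] at hle
        exact (ENNReal.ofReal_le_ofReal_iff (hTnn N)).1 hle
      obtain ⟨n, h1, h2⟩ := hfind T hTmono hT0 t ht (hTinf ▸ hlt)
      have hnN : n ≤ N := by
        by_contra hc
        push_neg at hc
        have : T (N + 1) ≤ T n := hTmono.monotone hc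
        linarith [hTstep N]
      rw [hX n t h1 h2]
      rcases lt_or_eq_of_le hnN with hlt' | heq
      · have h1' : T' n ≤ t := (hagreeN n hlt'.le).2 ▸ h1
        have h2' : t < T' (n + 1) := (hagreeN (n + 1) hlt').2 ▸ h2
        rw [hX' n t h1' h2', (hagreeN n hlt'.le).1]
      · have hteq : t = T N := le_antisymm htN (heq ▸ h1)
        have h1' : T' N ≤ t := by rw [hteq, hTN']
        have h2' : t < T' (N + 1) := by
          rw [hteq, hTN']
          exact hT'step N
        rw [heq, hX' N t h1' h2', hYN']
end

section
/- If Q is Metzler (Q x y ≥ 0 for all x ≠ y), then for every real t ≥ 0 and all x y : ι, 0 ≤ (Matrix.exp ℝ (t • Q)) x y. (Nonnegativity of the transition semigroup, underlying Theorem 2.5(i) and Theorem 1.1(i) of the paper.) -/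
/-- Mathlib's exponential, specialized to real matrices (`Matrix.exp ℝ`). -/
noncomputable def Matrix.exp (𝕂 : Type*) [Field 𝕂] {ι : Type*} [Fintype ι] [DecidableEq ι]
    [Algebra 𝕂 ℝ] (A : Matrix ι ι ℝ) : Matrix ι ι ℝ :=
  NormedSpace.exp A

/-!
A Metzler matrix becomes entrywise nonnegative after adding a large multiple `c • 1` of the
identity, and the exponential of a nonnegative matrix is a convergent series of nonnegative
matrices. Since `c • 1` is central, `exp A = exp (-c) • exp (A + c • 1)`.
-/

namespace Matrix

variable {ι : Type*} [Fintype ι] [DecidableEq ι]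

theorem exists_add_smul_one_nonneg {R : Type*} [Ring R] [LinearOrder R] [IsOrderedRing R]
    {A : Matrix ι ι R} (hA : ∀ i j, i ≠ j → 0 ≤ A i j) :
    ∃ c : R, ∀ i j, 0 ≤ (A + c • 1) i j := by
  refine ⟨∑ k, |A k k|, fun i j => ?_⟩
  rcases eq_or_ne i j with rfl | hij
  · have hdiag : |A i i| ≤ ∑ k, |A k k| :=
      Finset.single_le_sum (fun k _ => abs_nonneg (A k k)) (Finset.mem_univ i)
    simp only [add_apply, smul_apply, one_apply_eq, smul_eq_mul, mul_one]
    exact neg_le_iff_add_nonneg.mp ((neg_le_neg hdiag).trans (neg_abs_le _))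
  · simpa [one_apply_ne hij] using hA i j hij

open scoped Matrix.Norms.Operator in
theorem exp_apply_nonneg {A : Matrix ι ι ℝ} (hA : ∀ i j, 0 ≤ A i j) (i j : ι) :
    0 ≤ NormedSpace.exp A i j := by
  have hsum := Pi.hasSum.mp (Pi.hasSum.mp (NormedSpace.exp_series_hasSum_exp' (𝕂 := ℝ) A) i) j
  refine hsum.nonneg fun n => ?_
  simpa using mul_nonneg (by positivity) (pow_apply_nonneg hA n i j)

theorem exp_add_smul_one (A : Matrix ι ι ℝ) (c : ℝ) :
    NormedSpace.exp (A + c • 1) = Real.exp c • NormedSpace.exp A := by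
  rw [exp_add_of_commute _ _ ((Commute.one_right A).smul_right c), smul_one_eq_diagonal,
    exp_diagonal, Pi.exp_def, ← Real.exp_eq_exp_ℝ, ← smul_one_eq_diagonal, mul_smul_comm,
    mul_one]

theorem exp_apply_nonneg_of_metzler {A : Matrix ι ι ℝ} (hA : ∀ i j, i ≠ j → 0 ≤ A i j)
    (i j : ι) : 0 ≤ NormedSpace.exp A i j := by
  obtain ⟨c, hc⟩ := exists_add_smul_one_nonneg hA
  have hshift := exp_apply_nonneg hc i j
  rw [exp_add_smul_one, smul_apply, smul_eq_mul] at hshift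
  exact nonneg_of_mul_nonneg_right hshift (Real.exp_pos c)

end Matrix

theorem matrix_exp_nonneg_of_metzler_general {ι : Type*} [Fintype ι] [DecidableEq ι]
    (Q : Matrix ι ι ℝ) (hQ : ∀ x y, x ≠ y → Q x y ≥ 0) :
    ∀ t : ℝ, 0 ≤ t → ∀ x y : ι, 0 ≤ Matrix.exp ℝ (t • Q) x y :=
  fun t ht => Matrix.exp_apply_nonneg_of_metzler fun x y hxy => mul_nonneg ht (hQ x y hxy)

/-- If `Q` is Metzler (`Q x y ≥ 0` for all `x ≠ y`), then the transition semigroup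
`t ↦ exp (t • Q)` has nonnegative entries for every `t ≥ 0`. -/
theorem matrix_exp_nonneg_of_metzler {ι : Type*} [Fintype ι] [DecidableEq ι] [Nonempty ι]
    (Q : Matrix ι ι ℝ) (hQ : ∀ x y, x ≠ y → Q x y ≥ 0) :
    ∀ t : ℝ, 0 ≤ t → ∀ x y : ι, 0 ≤ Matrix.exp ℝ (t • Q) x y :=
  matrix_exp_nonneg_of_metzler_general Q hQ
end

section
/- Let Q be a (conservative) rate matrix, B : Set ι, and x0 ∈ B. Then for every real t ≥ 0, ∑ y ∈ B, (Matrix.exp ℝ (t • Q_B)) x0 y + ∫ s in (0)..(t), (∑ y ∈ B, ∑ z ∈ Bᶜ, (Matrix.exp ℝ (s • Q_B)) x0 y * Q y z) ds = 1. (Conservation/exit-flux identity underlying Theorem 1.1(ii)–(iii) of the paper: the probability of still being inside B plus the cumulative probability flux out of B equals one.) -/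
open Classical in
/-- The truncation `Q_A` of `Q` to `A`: every state outside `A` is made absorbing. -/
noncomputable def Matrix.truncation {ι : Type*} (Q : Matrix ι ι ℝ) (A : Set ι) :
    Matrix ι ι ℝ :=
  Matrix.of fun x y => if x ∈ A then Q x y else 0

/-!
Since `Q` is conservative, a row `z ∈ B` of `Q_B` sums over `B` to minus its flux `∑ y ∉ B, Q z y`,
and a row `z ∉ B` of `Q_B` vanishes. Hence `d/ds ∑ y ∈ B, exp (s Q_B) x0 y` equals
`∑ y ∈ B, (exp (s Q_B) Q_B) x0 y`, which is minus the flux integrand, and the identity is the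
fundamental theorem of calculus together with `exp 0 = 1`.
-/

namespace Matrix

variable {ι : Type*} [Fintype ι]

section Exp

variable [DecidableEq ι] (T : Matrix ι ι ℝ)

-- Any normed-algebra structure on matrices will do: it only serves to differentiate `exp`.
attribute [local instance] Matrix.linftyOpNormedRing Matrix.linftyOpNormedAlgebra in
theorem hasDerivAt_exp_smul_apply (x y : ι) (t : ℝ) :
    HasDerivAt (fun s : ℝ => Matrix.exp ℝ (s • T) x y) ((Matrix.exp ℝ (t • T) * T) x y) t := by
  let entry : Matrix ι ι ℝ →L[ℝ] ℝ :=
    LinearMap.toContinuousLinearMap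
      ((LinearMap.proj y).comp (LinearMap.proj x : (ι → ι → ℝ) →ₗ[ℝ] ι → ℝ))
  exact entry.hasFDerivAt.comp_hasDerivAt t (hasDerivAt_exp_smul_const T t)

theorem continuous_exp_smul_apply (x y : ι) :
    Continuous fun s : ℝ => Matrix.exp ℝ (s • T) x y :=
  continuous_iff_continuousAt.2 fun t => (hasDerivAt_exp_smul_apply T x y t).continuousAt

theorem exp_zero : Matrix.exp ℝ (0 : Matrix ι ι ℝ) = 1 :=
  NormedSpace.exp_zero

theorem integral_sum_exp_smul_mul_apply (S : Finset ι) (x : ι) (t : ℝ) :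
    ∫ s in (0 : ℝ)..t, ∑ y ∈ S, (Matrix.exp ℝ (s • T) * T) x y =
      ∑ y ∈ S, Matrix.exp ℝ (t • T) x y - ∑ y ∈ S, (1 : Matrix ι ι ℝ) x y := by
  have hcont : Continuous fun s : ℝ => ∑ y ∈ S, (Matrix.exp ℝ (s • T) * T) x y := by
    simp only [mul_apply]
    exact continuous_finsetSum _ fun y _ => continuous_finsetSum _ fun z _ =>
      (continuous_exp_smul_apply T x z).mul continuous_const
  simpa [exp_zero] using intervalIntegral.integral_eq_sub_of_hasDerivAt
    (fun s _ => HasDerivAt.fun_sum fun y _ => hasDerivAt_exp_smul_apply T x y s)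
    (hcont.intervalIntegrable 0 t)

end Exp

open Classical in
theorem sum_toFinset_truncation_apply (Q : Matrix ι ι ℝ) (hrow : ∀ x, ∑ y, Q x y = 0)
    (B : Set ι) [Fintype B] [Fintype ↑Bᶜ] (z : ι) :
    ∑ y ∈ B.toFinset, Q.truncation B z y = if z ∈ B then -∑ y ∈ Bᶜ.toFinset, Q z y else 0 := by
  split_ifs with hz
  · simp only [truncation, of_apply, if_pos hz]
    rw [eq_neg_iff_add_eq_zero, Set.toFinset_compl, Finset.sum_add_sum_compl, hrow]
  · simp [truncation, hz]

theorem sum_toFinset_mul_truncation_apply (P Q : Matrix ι ι ℝ) (hrow : ∀ x, ∑ y, Q x y = 0)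
    (B : Set ι) [Fintype B] [Fintype ↑Bᶜ] (x : ι) :
    ∑ y ∈ B.toFinset, (P * Q.truncation B) x y =
      -∑ y ∈ B.toFinset, ∑ z ∈ Bᶜ.toFinset, P x y * Q y z := by
  simp only [mul_apply]
  rw [Finset.sum_comm]
  simp only [← Finset.mul_sum, sum_toFinset_truncation_apply Q hrow, mul_ite, mul_zero, mul_neg,
    ← Finset.sum_filter, Finset.sum_neg_distrib]
  simp [Finset.mul_sum, Set.filter_mem_univ_eq_toFinset]

end Matrix

theorem matrix_exit_flux_identity_general {ι : Type*} [Fintype ι] [DecidableEq ι]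
    (Q : Matrix ι ι ℝ) (hrow : ∀ x, ∑ y, Q x y = 0) (B : Set ι) (x0 : ι) (hx0 : x0 ∈ B) :
    ∀ t : ℝ, 0 ≤ t →
      (∑ᶠ y ∈ B, Matrix.exp ℝ (t • Q.truncation B) x0 y) +
        (∫ s in (0 : ℝ)..t,
          ∑ᶠ y ∈ B, ∑ᶠ z ∈ Bᶜ, Matrix.exp ℝ (s • Q.truncation B) x0 y * Q y z) = 1 := by
  classical
  intro t _
  have hflux (s : ℝ) : ∑ y ∈ B.toFinset, ∑ z ∈ Bᶜ.toFinset,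
      Matrix.exp ℝ (s • Q.truncation B) x0 y * Q y z =
        -∑ y ∈ B.toFinset, (Matrix.exp ℝ (s • Q.truncation B) * Q.truncation B) x0 y := by
    rw [Matrix.sum_toFinset_mul_truncation_apply _ Q hrow, neg_neg]
  simp only [finsum_mem_eq_toFinset_sum, hflux, intervalIntegral.integral_neg,
    Matrix.integral_sum_exp_smul_mul_apply]
  simp [Matrix.one_apply, hx0]

/-- Conservation/exit-flux identity: for a conservative rate matrix `Q`, a truncation `B`
and an initial state `x0 ∈ B`, the probability of still being inside `B` at time `t` plus
the cumulative probability flux out of `B` up to time `t` equals one. -/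
theorem matrix_exit_flux_identity {ι : Type*} [Fintype ι] [DecidableEq ι] [Nonempty ι]
    (Q : Matrix ι ι ℝ) (hMetzler : ∀ x y, x ≠ y → Q x y ≥ 0)
    (hrow : ∀ x, ∑ y, Q x y = 0) (B : Set ι) (x0 : ι) (hx0 : x0 ∈ B) :
    ∀ t : ℝ, 0 ≤ t →
      (∑ᶠ y ∈ B, Matrix.exp ℝ (t • Q.truncation B) x0 y) +
        (∫ s in (0 : ℝ)..t,
          ∑ᶠ y ∈ B, ∑ᶠ z ∈ Bᶜ, Matrix.exp ℝ (s • Q.truncation B) x0 y * Q y z) = 1 :=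
  matrix_exit_flux_identity_general Q hrow B x0 hx0
end
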